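/- arXiv:0808.0440 — 2 statements merged into one kernel-verified Lean document; each statement's English description precedes it below -/
import Mathlib

section
/- Let G = {(t₁, t₂, c) ∈ Circle³ : c² t₁ = 1} (the lift group for j₁ = 1, j₂ = 0). The map ψ : Circle² → Circle³, ψ(τ₁, τ₂) = (τ₁², τ₂, τ₁⁻¹), is an injective continuous group homomorphism with image exactly G, hence a topological group isomorphism Circle² ≅ G, and the composition of ψ with the projection (t₁,t₂,c) ↦ (t₁,t₂) equals (τ₁, τ₂) ↦ (τ₁², τ₂). -/
/-!
The map `ψ(τ₁, τ₂) = (τ₁², τ₂, τ₁⁻¹)` has the continuous retraction `(t₁, t₂, c) ↦ (c⁻¹, t₂)`,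
so it is a topological embedding. A point with `c² t₁ = 1` is the image of its retraction,
because then `t₁ = (c⁻¹)²`; hence the image of `ψ` is exactly the lift group.
-/

namespace TorusLift

variable (A B : Type*) [CommGroup A] [Group B]

def lift : A × B →* A × B × A :=
  ((powMonoidHom 2).comp (MonoidHom.fst A B)).prod
    ((MonoidHom.snd A B).prod (invMonoidHom.comp (MonoidHom.fst A B)))

def retraction : A × B × A →* A × B :=
  (invMonoidHom.comp ((MonoidHom.snd B A).comp (MonoidHom.snd A (B × A)))).prod
    ((MonoidHom.fst B A).comp (MonoidHom.snd A (B × A)))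

variable {A B}

@[simp]
theorem lift_apply (τ : A × B) : lift A B τ = (τ.1 ^ 2, τ.2, τ.1⁻¹) := rfl

@[simp]
theorem retraction_apply (p : A × B × A) : retraction A B p = (p.2.2⁻¹, p.2.1) := rfl

theorem leftInverse_retraction_lift : Function.LeftInverse (retraction A B) (lift A B) :=
  fun τ => by simp

theorem lift_retraction_of_sq_mul_eq_one {p : A × B × A} (hp : p.2.2 ^ 2 * p.1 = 1) :
    lift A B (retraction A B p) = p := by
  have hp₁ : (p.2.2⁻¹) ^ 2 = p.1 := by
    rwa [inv_pow, inv_eq_iff_mul_eq_one]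
  simp [hp₁]

theorem coe_range_lift :
    ((lift A B).range : Set (A × B × A)) = {p | p.2.2 ^ 2 * p.1 = 1} := by
  ext p
  constructor
  · rintro ⟨τ, rfl⟩
    simp
  · intro hp
    exact ⟨retraction A B p, lift_retraction_of_sq_mul_eq_one hp⟩

variable [TopologicalSpace A] [TopologicalSpace B] [ContinuousInv A]

theorem continuous_lift [ContinuousMul A] : Continuous (lift A B) := by
  show Continuous fun τ : A × B => (τ.1 ^ 2, τ.2, τ.1⁻¹)
  fun_prop

theorem continuous_retraction : Continuous (retraction A B) := by
  show Continuous fun p : A × B × A => (p.2.2⁻¹, p.2.1)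
  fun_prop

end TorusLift

open TorusLift in
/-- The map `ψ(τ₁,τ₂) = (τ₁², τ₂, τ₁⁻¹)` is an injective continuous group homomorphism
of `Circle²` onto the lift group `G = {(t₁,t₂,c) : c² t₁ = 1}` (the case `j₁ = 1, j₂ = 0`),
hence a topological group isomorphism `Circle² ≅ G`, and composing `ψ` with the
projection `(t₁,t₂,c) ↦ (t₁,t₂)` gives `(τ₁,τ₂) ↦ (τ₁², τ₂)`. -/
theorem lift_group_j10_is_torus :
    ∃ G : Subgroup (Circle × Circle × Circle),
      (G : Set (Circle × Circle × Circle)) = {p | p.2.2 ^ 2 * p.1 = 1} ∧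
      ∃ ψ : Circle × Circle →* Circle × Circle × Circle,
        (∀ τ₁ τ₂ : Circle, ψ (τ₁, τ₂) = (τ₁ ^ 2, τ₂, τ₁⁻¹)) ∧
        Function.Injective ψ ∧ Continuous ψ ∧
        Set.range ψ = (G : Set (Circle × Circle × Circle)) ∧
        (∃ e : (Circle × Circle) ≃* G,
          Continuous e ∧ Continuous e.symm ∧
          ∀ τ : Circle × Circle, (e τ : Circle × Circle × Circle) = ψ τ) ∧
        ∀ τ₁ τ₂ : Circle,
          ((ψ (τ₁, τ₂)).1, (ψ (τ₁, τ₂)).2.1) = (τ₁ ^ 2, τ₂) := by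
  let e := MonoidHom.ofLeftInverse (leftInverse_retraction_lift (A := Circle) (B := Circle))
  refine ⟨(lift Circle Circle).range, coe_range_lift, lift Circle Circle, fun _ _ => rfl,
    leftInverse_retraction_lift.injective, continuous_lift, (MonoidHom.coe_range _).symm,
    ⟨e, ?_, ?_, fun _ => rfl⟩, fun _ _ => rfl⟩
  · exact continuous_lift.subtype_mk _
  · exact continuous_retraction.comp continuous_subtype_val
end

section
/- Fix θ ∈ ℝ and let H = ℓ²(ℤ²). Define unitary operators U, V, W on H by (U f)(m,n) = f(m−1, n), (V f)(m,n) = e^{iπθ m} f(m, n−1), and (W f)(m,n) = (−1)^m f(m,n). Let A be the C*-subalgebra of bounded operators on H generated by {U, V}. Then W U W⁻¹ = −U and W V W⁻¹ = V, so conjugation by W restricts to a *-automorphism of A of order 2, and the C*-subalgebra of A generated by {U², V} equals the fixed-point subalgebra {a ∈ A : W a W⁻¹ = a}. -/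
open Real

/-!
The grading `a ↦ W a W*` is `-1` on `U` and `+1` on `V`, and `V U = e^{iπθ} U V`. Hence
conjugation by `U` preserves `B = C*(U², V)`, so `B + U B` is a star subalgebra; it contains `U` and
`V`, hence the algebra they generate. On `B + U B` the average `a ↦ (a + W a W*) / 2` is the
projection `b + U c ↦ b` onto `B`; it is continuous and is the identity on fixed points, so it
carries the fixed points of the closure into the closure of `B`.
-/

theorem Unitary.mul_mul_star_self_of_mem {R : Type*} [Monoid R] [StarMul R] {u : R}
    (hu : u ∈ unitary R) (x : R) : x * u * star u = x := by
  rw [mul_assoc, Unitary.mul_star_self_of_mem hu, mul_one]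

theorem Unitary.continuous_conjStarAlgAut (S : Type*) {R : Type*} [Semiring R] [StarMul R]
    [SMul S R] [IsScalarTower S R R] [SMulCommClass S R R] [TopologicalSpace R]
    [IsSemitopologicalSemiring R] (u : unitary R) : Continuous (Unitary.conjStarAlgAut S R u) :=
  (continuous_const_mul (u : R)).mul_const (star u : R)

namespace StarAlgEquiv

variable {R A : Type*} [CommSemiring R] [StarRing R] [Semiring A] [StarRing A] [Algebra R A]
  [StarModule R A]

def restrict (e : A ≃⋆ₐ[R] A) (S : StarSubalgebra R A) (he : Set.MapsTo e S S)
    (he' : Set.MapsTo e.symm S S) : S ≃⋆ₐ[R] S :=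
  ofStarAlgHom ((e.toStarAlgHom.comp S.subtype).codRestrict S fun x => he x.2)
    ((e.symm.toStarAlgHom.comp S.subtype).codRestrict S fun x => he' x.2)
    (StarAlgHom.ext fun x => Subtype.ext (e.symm_apply_apply x))
    (StarAlgHom.ext fun x => Subtype.ext (e.apply_symm_apply x))

end StarAlgEquiv

namespace StarSubalgebra

section Extension

variable {R A : Type*} [CommSemiring R] [StarRing R] [Semiring A] [StarRing A] [Algebra R A]
  [StarModule R A] (B : StarSubalgebra R A) {u : A}

def extendByUnitary (hu : u ∈ unitary A) (hu2 : u ^ 2 ∈ B)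
    (hB : Set.MapsTo (fun b => star u * b * u) B B) : StarSubalgebra R A where
  carrier := {a | ∃ b ∈ B, ∃ c ∈ B, b + u * c = a}
  mul_mem' := by
    rintro _ _ ⟨b₁, hb₁, c₁, hc₁, rfl⟩ ⟨b₂, hb₂, c₂, hc₂, rfl⟩
    refine ⟨b₁ * b₂ + u ^ 2 * ((star u * c₁ * u) * c₂),
      add_mem (mul_mem hb₁ hb₂) (mul_mem hu2 (mul_mem (hB hc₁) hc₂)),
      (star u * b₁ * u) * c₂ + c₁ * b₂, add_mem (mul_mem (hB hb₁) hc₂) (mul_mem hc₁ hb₂), ?_⟩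
    simp only [pow_two, mul_add, add_mul, ← mul_assoc, Unitary.mul_mul_star_self_of_mem hu,
      Unitary.mul_star_self_of_mem hu, one_mul]
    abel
  one_mem' := ⟨1, B.one_mem, 0, B.zero_mem, by simp⟩
  add_mem' := by
    rintro _ _ ⟨b₁, hb₁, c₁, hc₁, rfl⟩ ⟨b₂, hb₂, c₂, hc₂, rfl⟩
    exact ⟨b₁ + b₂, add_mem hb₁ hb₂, c₁ + c₂, add_mem hc₁ hc₂, by rw [mul_add]; abel⟩
  zero_mem' := ⟨0, B.zero_mem, 0, B.zero_mem, by simp⟩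
  algebraMap_mem' r := ⟨algebraMap R A r, B.algebraMap_mem r, 0, B.zero_mem, by simp⟩
  star_mem' := by
    rintro _ ⟨b, hb, c, hc, rfl⟩
    refine ⟨star b, star_mem hb, (star u * star c * u) * star (u ^ 2),
      mul_mem (hB (star_mem hc)) (star_mem hu2), ?_⟩
    simp only [pow_two, star_add, star_mul, ← mul_assoc, Unitary.mul_star_self_of_mem hu,
      Unitary.mul_mul_star_self_of_mem hu, one_mul]

theorem mem_extendByUnitary (hu : u ∈ unitary A) (hu2 : u ^ 2 ∈ B)
    (hB : Set.MapsTo (fun b => star u * b * u) B B) {a : A} :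
    a ∈ B.extendByUnitary hu hu2 hB ↔ ∃ b ∈ B, ∃ c ∈ B, b + u * c = a :=
  Iff.rfl

end Extension

variable {𝕜 A : Type*} [Field 𝕜] [NeZero (2 : 𝕜)] [StarRing 𝕜] [TopologicalSpace A] [Ring A]
  [StarRing A] [Algebra 𝕜 A] [StarModule 𝕜 A] [IsSemitopologicalRing A] [ContinuousStar A]
  [ContinuousConstSMul 𝕜 A] [T2Space A]

theorem coe_topologicalClosure_eq_fixedPoints {B S : StarSubalgebra 𝕜 A} {u : A}
    (hBS : B ≤ S) (hSB : ∀ a ∈ S, ∃ b ∈ B, ∃ c ∈ B, b + u * c = a) (σ : A →⋆ₐ[𝕜] A)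
    (hσ : Continuous σ) (hσB : B ≤ StarAlgHom.equalizer σ (StarAlgHom.id 𝕜 A)) (hσu : σ u = -u) :
    (B.topologicalClosure : Set A) = {a | a ∈ S.topologicalClosure ∧ σ a = a} := by
  let E : A → A := fun x => (2⁻¹ : 𝕜) • (x + σ x)
  have hE : Continuous E := (continuous_id.add hσ).const_smul _
  have hE_fixed : ∀ a, σ a = a → E a = a := fun a ha => by
    simp only [E, ha, ← two_smul 𝕜, smul_smul, inv_mul_cancel₀ (two_ne_zero' 𝕜), one_smul]
  have hES : Set.MapsTo E S B := by
    intro a ha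
    obtain ⟨b, hb, c, hc, rfl⟩ := hSB a ha
    have hEbc : E (b + u * c) = b := by
      simp only [E, map_add, map_mul, show σ b = b from hσB hb, show σ c = c from hσB hc, hσu]
      rw [neg_mul, add_add_add_comm, add_neg_cancel, add_zero, ← two_smul 𝕜, smul_smul,
        inv_mul_cancel₀ (two_ne_zero' 𝕜), one_smul]
    rwa [hEbc]
  have hσ_closure : B.topologicalClosure ≤ StarAlgHom.equalizer σ (StarAlgHom.id 𝕜 A) :=
    topologicalClosure_minimal hσB (isClosed_eq hσ continuous_id)
  ext a
  constructor
  · exact fun ha => ⟨topologicalClosure_mono hBS ha, hσ_closure ha⟩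
  · rintro ⟨ha, hσa⟩
    rw [← hE_fixed a hσa]
    exact hES.closure hE ha

end StarSubalgebra

namespace StarAlgebra

section Adjoin

variable {R A : Type*} [CommSemiring R] [StarRing R] [Semiring A] [StarRing A] [Algebra R A]
  [StarModule R A]

theorem mapsTo_adjoin {s : Set A} (φ : A →⋆ₐ[R] A) (hs : Set.MapsTo φ s (adjoin R s)) :
    Set.MapsTo φ (adjoin R s) (adjoin R s) :=
  fun _ hx => adjoin_le (S := (adjoin R s).comap φ) hs hx

variable {u v : A}

theorem sq_mem_adjoin_sq_pair : u ^ 2 ∈ adjoin R {u ^ 2, v} :=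
  subset_adjoin R _ (Set.mem_insert _ _)

theorem mem_adjoin_sq_pair : v ∈ adjoin R {u ^ 2, v} :=
  subset_adjoin R _ (Set.mem_insert_of_mem _ rfl)

theorem adjoin_sq_pair_le_adjoin_pair : adjoin R {u ^ 2, v} ≤ adjoin R {u, v} :=
  adjoin_le <| Set.pair_subset_iff.mpr
    ⟨pow_mem (subset_adjoin R _ (Set.mem_insert _ _)) 2,
      subset_adjoin R _ (Set.mem_insert_of_mem _ rfl)⟩

theorem mapsTo_star_mul_mul_adjoin_sq_pair (hu : u ∈ unitary A) {c : R}
    (hvu : v * u = c • (u * v)) :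
    Set.MapsTo (fun b => star u * b * u) (adjoin R {u ^ 2, v}) (adjoin R {u ^ 2, v}) := by
  let ψ := (Unitary.conjStarAlgAut R A ⟨u, hu⟩).symm.toStarAlgHom
  have hψ : Set.MapsTo ψ {u ^ 2, v} (adjoin R {u ^ 2, v}) := by
    rw [Set.mapsTo_iff_subset_preimage, Set.pair_subset_iff]
    constructor
    · change star u * u ^ 2 * u ∈ adjoin R {u ^ 2, v}
      rw [pow_two, ← mul_assoc, Unitary.star_mul_self_of_mem hu, one_mul, ← pow_two]
      exact sq_mem_adjoin_sq_pair
    · change star u * v * u ∈ adjoin R {u ^ 2, v}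
      rw [mul_assoc, hvu, mul_smul_comm, ← mul_assoc, Unitary.star_mul_self_of_mem hu, one_mul]
      exact SMulMemClass.smul_mem _ mem_adjoin_sq_pair
  exact fun b hb => mapsTo_adjoin ψ hψ hb

theorem exists_add_mul_of_mem_adjoin_pair (hu : u ∈ unitary A) {c : R}
    (hvu : v * u = c • (u * v)) {a : A} (ha : a ∈ adjoin R {u, v}) :
    ∃ b ∈ adjoin R {u ^ 2, v}, ∃ d ∈ adjoin R {u ^ 2, v}, b + u * d = a := by
  let S := (adjoin R {u ^ 2, v}).extendByUnitary hu sq_mem_adjoin_sq_pair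
    (mapsTo_star_mul_mul_adjoin_sq_pair hu hvu)
  have hS : adjoin R {u, v} ≤ S := adjoin_le <| Set.pair_subset_iff.mpr
    ⟨⟨0, zero_mem _, 1, one_mem _, by simp⟩, ⟨v, mem_adjoin_sq_pair, 0, zero_mem _, by simp⟩⟩
  exact (StarSubalgebra.mem_extendByUnitary _ _ _ _).mp (hS ha)

variable [TopologicalSpace A] [IsSemitopologicalSemiring A] [ContinuousStar A]

theorem exists_conj_involution_topologicalClosure_adjoin {s : Set A} {w : A}
    (hw : w ∈ unitary A) (hww : w * w = 1)
    (hs : Set.MapsTo (fun x => w * x * star w) s (adjoin R s)) :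
    ∃ Φ : (adjoin R s).topologicalClosure ≃⋆ₐ[R] (adjoin R s).topologicalClosure,
      (∀ a, (Φ a : A) = w * a * star w) ∧ ∀ a, Φ (Φ a) = a := by
  let σ := Unitary.conjStarAlgAut R A ⟨w, hw⟩
  have hσσ : ∀ x, σ (σ x) = x := fun x => by
    rw [← Unitary.conjStarAlgAut_mul_apply,
      show (⟨w, hw⟩ * ⟨w, hw⟩ : unitary A) = 1 from Subtype.ext hww, map_one,
      StarAlgEquiv.one_apply]
  have hσS : Set.MapsTo σ (adjoin R s).topologicalClosure (adjoin R s).topologicalClosure :=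
    (mapsTo_adjoin σ.toStarAlgHom hs).closure (Unitary.continuous_conjStarAlgAut R _)
  refine ⟨σ.restrict _ hσS fun x hx => ?_, fun _ => rfl, fun a => Subtype.ext (hσσ a)⟩
  rw [σ.symm_apply_eq.mpr (hσσ x).symm]
  exact hσS hx

end Adjoin

variable {𝕜 A : Type*} [Field 𝕜] [NeZero (2 : 𝕜)] [StarRing 𝕜] [TopologicalSpace A] [Ring A]
  [StarRing A] [Algebra 𝕜 A] [StarModule 𝕜 A] [IsSemitopologicalRing A] [ContinuousStar A]
  [ContinuousConstSMul 𝕜 A] [T2Space A] {u v w : A}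

theorem coe_topologicalClosure_adjoin_sq_pair (hu : u ∈ unitary A) (hw : w ∈ unitary A) {c : 𝕜}
    (hvu : v * u = c • (u * v)) (hwu : w * u * star w = -u) (hwv : w * v * star w = v) :
    ((adjoin 𝕜 {u ^ 2, v}).topologicalClosure : Set A) =
      {a | a ∈ (adjoin 𝕜 {u, v}).topologicalClosure ∧ w * a * star w = a} := by
  let σ := Unitary.conjStarAlgAut 𝕜 A ⟨w, hw⟩
  have hσB : adjoin 𝕜 {u ^ 2, v} ≤ StarAlgHom.equalizer σ.toStarAlgHom (StarAlgHom.id 𝕜 A) := by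
    refine adjoin_le (Set.pair_subset_iff.mpr ⟨?_, hwv⟩)
    change σ (u ^ 2) = u ^ 2
    rw [map_pow, show σ u = -u from hwu, neg_sq]
  exact StarSubalgebra.coe_topologicalClosure_eq_fixedPoints adjoin_sq_pair_le_adjoin_pair
    (fun a => exists_add_mul_of_mem_adjoin_pair hu hvu) σ.toStarAlgHom
    (Unitary.continuous_conjStarAlgAut 𝕜 _) hσB hwu

end StarAlgebra

local notation "𝓗" => lp (fun _ : ℤ × ℤ => ℂ) 2

section Operators

variable {U V W : 𝓗 →L[ℂ] 𝓗}

theorem operator_ext {S T : 𝓗 →L[ℂ] 𝓗} (h : ∀ f m n, (S f) (m, n) = (T f) (m, n)) : S = T := by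
  ext f ⟨m, n⟩
  exact h f m n

theorem parity_mul_self (hW : ∀ (f : 𝓗) (m n : ℤ), (W f) (m, n) = (-1 : ℂ) ^ m * f (m, n)) :
    W * W = 1 :=
  operator_ext fun f m n => by
    simp only [mul_apply_eq_comp, hW, one_apply_eq_self, ← mul_assoc, ← mul_zpow]
    norm_num

theorem parity_mul_shift (hU : ∀ (f : 𝓗) (m n : ℤ), (U f) (m, n) = f (m - 1, n))
    (hW : ∀ (f : 𝓗) (m n : ℤ), (W f) (m, n) = (-1 : ℂ) ^ m * f (m, n)) :
    W * U = -(U * W) :=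
  operator_ext fun f m n => by
    simp only [mul_apply_eq_comp, hW, hU, neg_apply, lp.coeFn_neg, Pi.neg_apply,
      zpow_sub₀ (neg_ne_zero.mpr one_ne_zero : (-1 : ℂ) ≠ 0)]
    ring

theorem parity_mul_twistedShift {θ : ℝ} (hV : ∀ (f : 𝓗) (m n : ℤ),
      (V f) (m, n) = Complex.exp (Complex.I * (π : ℂ) * (θ : ℂ) * (m : ℂ)) * f (m, n - 1))
    (hW : ∀ (f : 𝓗) (m n : ℤ), (W f) (m, n) = (-1 : ℂ) ^ m * f (m, n)) :
    W * V = V * W :=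
  operator_ext fun f m n => by
    simp only [mul_apply_eq_comp, hW, hV]
    ring

theorem twistedShift_mul_shift {θ : ℝ} (hU : ∀ (f : 𝓗) (m n : ℤ), (U f) (m, n) = f (m - 1, n))
    (hV : ∀ (f : 𝓗) (m n : ℤ),
      (V f) (m, n) = Complex.exp (Complex.I * (π : ℂ) * (θ : ℂ) * (m : ℂ)) * f (m, n - 1)) :
    V * U = Complex.exp (Complex.I * π * θ) • (U * V) :=
  operator_ext fun f m n => by
    simp only [mul_apply_eq_comp, hV, hU, smul_apply, lp.coeFn_smul, Pi.smul_apply, smul_eq_mul,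
      ← mul_assoc, ← Complex.exp_add]
    congr 2
    push_cast
    ring

end Operators

theorem noncommutative_double_cover_fixed_points_general
    (θ : ℝ)
    (U V W : lp (fun _ : ℤ × ℤ => ℂ) 2 →L[ℂ] lp (fun _ : ℤ × ℤ => ℂ) 2)
    (hUu : U ∈ unitary (lp (fun _ : ℤ × ℤ => ℂ) 2 →L[ℂ] lp (fun _ : ℤ × ℤ => ℂ) 2))
    (hWu : W ∈ unitary (lp (fun _ : ℤ × ℤ => ℂ) 2 →L[ℂ] lp (fun _ : ℤ × ℤ => ℂ) 2))
    (hUdef : ∀ (f : lp (fun _ : ℤ × ℤ => ℂ) 2) (m n : ℤ), (U f) (m, n) = f (m - 1, n))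
    (hVdef : ∀ (f : lp (fun _ : ℤ × ℤ => ℂ) 2) (m n : ℤ),
      (V f) (m, n) = Complex.exp (Complex.I * (π : ℂ) * (θ : ℂ) * (m : ℂ)) * f (m, n - 1))
    (hWdef : ∀ (f : lp (fun _ : ℤ × ℤ => ℂ) 2) (m n : ℤ),
      (W f) (m, n) = (-1 : ℂ) ^ m * f (m, n)) :
    W * U * star W = -U ∧
    W * V * star W = V ∧
    (∃ Φ : (StarAlgebra.adjoin ℂ
          ({U, V} : Set (lp (fun _ : ℤ × ℤ => ℂ) 2 →L[ℂ] lp (fun _ : ℤ × ℤ => ℂ) 2))).topologicalClosure ≃⋆ₐ[ℂ]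
        (StarAlgebra.adjoin ℂ
          ({U, V} : Set (lp (fun _ : ℤ × ℤ => ℂ) 2 →L[ℂ] lp (fun _ : ℤ × ℤ => ℂ) 2))).topologicalClosure,
      (∀ a, (Φ a : lp (fun _ : ℤ × ℤ => ℂ) 2 →L[ℂ] lp (fun _ : ℤ × ℤ => ℂ) 2) =
        W * (a : lp (fun _ : ℤ × ℤ => ℂ) 2 →L[ℂ] lp (fun _ : ℤ × ℤ => ℂ) 2) * star W) ∧
      (∀ a, Φ (Φ a) = a)) ∧
    ((StarAlgebra.adjoin ℂ
        ({U ^ 2, V} : Set (lp (fun _ : ℤ × ℤ => ℂ) 2 →L[ℂ] lp (fun _ : ℤ × ℤ => ℂ) 2))).topologicalClosure :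
        Set (lp (fun _ : ℤ × ℤ => ℂ) 2 →L[ℂ] lp (fun _ : ℤ × ℤ => ℂ) 2)) =
      {a | a ∈ (StarAlgebra.adjoin ℂ
          ({U, V} : Set (lp (fun _ : ℤ × ℤ => ℂ) 2 →L[ℂ] lp (fun _ : ℤ × ℤ => ℂ) 2))).topologicalClosure ∧
        W * a * star W = a} := by
  have hWU : W * U * star W = -U := by
    rw [parity_mul_shift hUdef hWdef, neg_mul, Unitary.mul_mul_star_self_of_mem hWu]
  have hWV : W * V * star W = V := by
    rw [parity_mul_twistedShift hVdef hWdef, Unitary.mul_mul_star_self_of_mem hWu]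
  have hUA : U ∈ StarAlgebra.adjoin ℂ {U, V} := StarAlgebra.subset_adjoin ℂ _ (Set.mem_insert _ _)
  have hVA : V ∈ StarAlgebra.adjoin ℂ {U, V} :=
    StarAlgebra.subset_adjoin ℂ _ (Set.mem_insert_of_mem _ rfl)
  refine ⟨hWU, hWV, ?_, StarAlgebra.coe_topologicalClosure_adjoin_sq_pair hUu hWu
    (twistedShift_mul_shift hUdef hVdef) hWU hWV⟩
  refine StarAlgebra.exists_conj_involution_topologicalClosure_adjoin hWu (parity_mul_self hWdef)
    (Set.mapsTo_iff_subset_preimage.mpr (Set.pair_subset_iff.mpr ⟨?_, ?_⟩))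
  · change W * U * star W ∈ StarAlgebra.adjoin ℂ {U, V}
    rw [hWU]
    exact neg_mem hUA
  · change W * V * star W ∈ StarAlgebra.adjoin ℂ {U, V}
    rw [hWV]
    exact hVA

/-- On `H = ℓ²(ℤ²)`, let `U, V, W` be the unitaries
`(U f)(m,n) = f(m-1,n)`, `(V f)(m,n) = e^{iπθm} f(m,n-1)`, `(W f)(m,n) = (-1)^m f(m,n)`,
and let `A = C*(U, V)`. Then `W U W⁻¹ = -U` and `W V W⁻¹ = V`, conjugation by `W`
restricts to a `*`-automorphism of `A` of order 2, and the C*-subalgebra of `A`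
generated by `U², V` is exactly its fixed-point subalgebra. -/
theorem noncommutative_double_cover_fixed_points
    (θ : ℝ)
    (U V W : lp (fun _ : ℤ × ℤ => ℂ) 2 →L[ℂ] lp (fun _ : ℤ × ℤ => ℂ) 2)
    (hUu : U ∈ unitary (lp (fun _ : ℤ × ℤ => ℂ) 2 →L[ℂ] lp (fun _ : ℤ × ℤ => ℂ) 2))
    (hVu : V ∈ unitary (lp (fun _ : ℤ × ℤ => ℂ) 2 →L[ℂ] lp (fun _ : ℤ × ℤ => ℂ) 2))
    (hWu : W ∈ unitary (lp (fun _ : ℤ × ℤ => ℂ) 2 →L[ℂ] lp (fun _ : ℤ × ℤ => ℂ) 2))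
    (hUdef : ∀ (f : lp (fun _ : ℤ × ℤ => ℂ) 2) (m n : ℤ), (U f) (m, n) = f (m - 1, n))
    (hVdef : ∀ (f : lp (fun _ : ℤ × ℤ => ℂ) 2) (m n : ℤ),
      (V f) (m, n) = Complex.exp (Complex.I * (π : ℂ) * (θ : ℂ) * (m : ℂ)) * f (m, n - 1))
    (hWdef : ∀ (f : lp (fun _ : ℤ × ℤ => ℂ) 2) (m n : ℤ),
      (W f) (m, n) = (-1 : ℂ) ^ m * f (m, n)) :
    W * U * star W = -U ∧
    W * V * star W = V ∧
    (∃ Φ : (StarAlgebra.adjoin ℂ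
          ({U, V} : Set (lp (fun _ : ℤ × ℤ => ℂ) 2 →L[ℂ] lp (fun _ : ℤ × ℤ => ℂ) 2))).topologicalClosure ≃⋆ₐ[ℂ]
        (StarAlgebra.adjoin ℂ
          ({U, V} : Set (lp (fun _ : ℤ × ℤ => ℂ) 2 →L[ℂ] lp (fun _ : ℤ × ℤ => ℂ) 2))).topologicalClosure,
      (∀ a, (Φ a : lp (fun _ : ℤ × ℤ => ℂ) 2 →L[ℂ] lp (fun _ : ℤ × ℤ => ℂ) 2) =
        W * (a : lp (fun _ : ℤ × ℤ => ℂ) 2 →L[ℂ] lp (fun _ : ℤ × ℤ => ℂ) 2) * star W) ∧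
      (∀ a, Φ (Φ a) = a)) ∧
    ((StarAlgebra.adjoin ℂ
        ({U ^ 2, V} : Set (lp (fun _ : ℤ × ℤ => ℂ) 2 →L[ℂ] lp (fun _ : ℤ × ℤ => ℂ) 2))).topologicalClosure :
        Set (lp (fun _ : ℤ × ℤ => ℂ) 2 →L[ℂ] lp (fun _ : ℤ × ℤ => ℂ) 2)) =
      {a | a ∈ (StarAlgebra.adjoin ℂ
          ({U, V} : Set (lp (fun _ : ℤ × ℤ => ℂ) 2 →L[ℂ] lp (fun _ : ℤ × ℤ => ℂ) 2))).topologicalClosure ∧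
        W * a * star W = a} :=
  noncommutative_double_cover_fixed_points_general θ U V W hUu hWu hUdef hVdef hWdef
end
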